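/- arXiv:0704.0622 — 3 statements merged into one kernel-verified Lean document; each statement's English description precedes it below -/
import Mathlib

section
/- If f2 and f3 are homogeneous of degrees 2 and 3 defining a smooth conic and a smooth cubic intersecting transversally, then at each common zero the sextic f3^2 - f2^3 = 0 has an ordinary cusp: in suitable local affine coordinates its equation has the form q1(x,y)^2 - p1(x,y)^3 + (terms of degree ≥ 4) = 0, where p1 and q1 are linearly independent linear forms; equivalently the local singularity is of type A_2. -/
/-!
Transversality lets us pick directions `u`, `v` with `∇f₂(x)·u = 1`, `∇f₃(x)·u = 0`,
`∇f₂(x)·v = 0`, `∇f₃(x)·v = 1`; by Euler `∇fₖ(x)·x = 0`, so `x, u, v` is a basis. Write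
`f(x + s u + t v) = Σⱼ Pⱼ(s, t)`, with `Pⱼ` homogeneous of degree `deg f - j`; the top two pieces
are `f(x) = 0` and the differential. Homogeneity turns the chart `x + s(u + νx) + t(v + μx)`
into `Σⱼ Pⱼ · (1 + W)ʲ` with `W = νs + μt`, so there `f₂ = s + O(2)` and
`f₃ = t + (P₁ + 2Wt) + O(3)`, whence `f₃² - f₂³ ≡ t² + 2t(P₁ + 2Wt) - s³` modulo degree `4`.
The three parameters `ν, μ, d` are exactly what is needed to make
`2t(P₁ + 2Wt) - s³ = -(s + d t)³`.
-/

open MvPolynomial Matrix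

theorem Ideal.mul_mem_pow_of_le {A : Type*} [CommRing A] {I : Ideal A} {a b : A} {m n k : ℕ}
    (ha : a ∈ I ^ m) (hb : b ∈ I ^ n) (hk : k ≤ m + n) : a * b ∈ I ^ k :=
  Ideal.pow_le_pow_right hk (pow_add I m n ▸ Ideal.mul_mem_mul ha hb)

theorem sq_sub_cube_sub_mem_pow_four {A : Type*} [CommRing A] {I : Ideal A}
    {s t Q R₂ R₃ p : A} (hs : s ∈ I) (ht : t ∈ I) (hQ : Q ∈ I ^ 2) (hR₂ : R₂ ∈ I ^ 2)
    (hR₃ : R₃ ∈ I ^ 3) (hcube : 2 * t * Q = s ^ 3 - p ^ 3) :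
    (t + Q + R₃) ^ 2 - (s + R₂) ^ 3 - (t ^ 2 - p ^ 3) ∈ I ^ 4 := by
  rw [← pow_one I] at hs ht
  have hs2 : s ^ 2 ∈ I ^ 2 := pow_one I ▸ Ideal.pow_mem_pow hs 2
  rw [show (t + Q + R₃) ^ 2 - (s + R₂) ^ 3 - (t ^ 2 - p ^ 3)
      = Q * Q + 2 * (t * R₃) + 2 * (Q * R₃) + R₃ * R₃ - 3 * (s ^ 2 * R₂)
        - 3 * (s * (R₂ * R₂)) - R₂ * (R₂ * R₂) by linear_combination hcube]
  refine sub_mem (sub_mem (sub_mem (add_mem (add_mem (add_mem ?_ ?_) ?_) ?_) ?_) ?_) ?_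
  · exact Ideal.mul_mem_pow_of_le hQ hQ le_rfl
  · exact Ideal.mul_mem_left _ _ (Ideal.mul_mem_pow_of_le ht hR₃ le_rfl)
  · exact Ideal.mul_mem_left _ _ (Ideal.mul_mem_pow_of_le hQ hR₃ (by norm_num))
  · exact Ideal.mul_mem_pow_of_le hR₃ hR₃ (by norm_num)
  · exact Ideal.mul_mem_left _ _ (Ideal.mul_mem_pow_of_le hs2 hR₂ le_rfl)
  · exact Ideal.mul_mem_left _ _
      (Ideal.mul_mem_pow_of_le hs (Ideal.mul_mem_pow_of_le hR₂ hR₂ le_rfl) (by norm_num))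
  · exact Ideal.mul_mem_pow_of_le hR₂ (Ideal.mul_mem_pow_of_le hR₂ hR₂ le_rfl) (by norm_num)

theorem shifted_sq_sub_cube_sub_mem_pow_four {A : Type*} [CommRing A] {I : Ideal A}
    {s t W P₀ P₁ B₀ p : A} (hs : s ∈ I) (ht : t ∈ I) (hW : W ∈ I) (hP₀ : P₀ ∈ I ^ 3)
    (hP₁ : P₁ ∈ I ^ 2) (hB₀ : B₀ ∈ I ^ 2) (hcube : 2 * t * (P₁ + 2 * W * t) = s ^ 3 - p ^ 3) :
    (P₀ + P₁ * (1 + W) + t * (1 + W) ^ 2) ^ 2 - (B₀ + s * (1 + W)) ^ 3 - (t ^ 2 - p ^ 3)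
      ∈ I ^ 4 := by
  rw [← pow_one I] at hs ht hW
  have hQ : P₁ + 2 * W * t ∈ I ^ 2 :=
    add_mem hP₁ (Ideal.mul_mem_pow_of_le (Ideal.mul_mem_left _ 2 hW) ht le_rfl)
  have hR₂ : B₀ + W * s ∈ I ^ 2 := add_mem hB₀ (Ideal.mul_mem_pow_of_le hW hs le_rfl)
  have hR₃ : P₀ + W * P₁ + W ^ 2 * t ∈ I ^ 3 :=
    add_mem (add_mem hP₀ (Ideal.mul_mem_pow_of_le hW hP₁ le_rfl))
      (Ideal.mul_mem_pow_of_le (pow_one I ▸ Ideal.pow_mem_pow hW 2) ht le_rfl)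
  rw [pow_one] at hs ht
  convert sq_sub_cube_sub_mem_pow_four hs ht hQ hR₂ hR₃ hcube using 2
  ring

theorem Matrix.mulVec_surjective_of_linearIndependent_row {K m n : Type*} [Field K]
    [Fintype m] [Fintype n] {M : Matrix m n K} (h : LinearIndependent K M.row) :
    Function.Surjective M.mulVec :=
  LinearMap.range_eq_top.mp <| Submodule.eq_top_of_finrank_eq <|
    h.rank_matrix.trans (Module.finrank_fintype_fun_eq_card K).symm

theorem linearIndependent_add_smul_of_dotProduct_eq {K n : Type*} [Field K] [Fintype n]
    {a b x u v : n → K} (hx : x ≠ 0) (hax : a ⬝ᵥ x = 0) (hbx : b ⬝ᵥ x = 0)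
    (hau : a ⬝ᵥ u = 1) (hbu : b ⬝ᵥ u = 0) (hav : a ⬝ᵥ v = 0) (hbv : b ⬝ᵥ v = 1) (ν μ : K) :
    LinearIndependent K ![x, u + ν • x, v + μ • x] := by
  rw [Fintype.linearIndependent_iff]
  intro g hg
  simp only [Fin.sum_univ_three, Matrix.cons_val_zero, Matrix.cons_val_one, Matrix.cons_val_two,
    Matrix.head_cons, Matrix.tail_cons] at hg
  have h₁ : g 1 = 0 := by
    simpa [dotProduct_add, dotProduct_smul, hax, hau, hav] using congrArg (a ⬝ᵥ ·) hg
  have h₂ : g 2 = 0 := by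
    simpa [dotProduct_add, dotProduct_smul, hbx, hbu, hbv] using congrArg (b ⬝ᵥ ·) hg
  have h₀ : g 0 = 0 := by
    simpa [h₁, h₂, hx] using hg
  intro i
  fin_cases i <;> assumption

namespace MvPolynomial

theorem aeval_cons_X_eq_eval_finSuccEquiv {R : Type*} [CommSemiring R] {N : ℕ}
    (K : MvPolynomial (Fin (N + 1)) R) (y : MvPolynomial (Fin N) R) :
    aeval (Fin.cons y X) K = (finSuccEquiv R N K).eval y := by
  induction K using MvPolynomial.induction_on with
  | C a => simp [finSuccEquiv_apply]
  | add p q hp hq => rw [map_add, map_add, hp, hq, Polynomial.eval_add]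
  | mul_X p j hp =>
    rw [map_mul, map_mul, hp, Polynomial.eval_mul, aeval_X]
    cases j using Fin.cases <;> simp [finSuccEquiv_X_zero, finSuccEquiv_X_succ]

variable {R σ : Type*} [CommRing R]

noncomputable def gradAt (f : MvPolynomial σ R) (x : σ → R) : σ → R :=
  fun i => eval x (pderiv i f)

theorem IsHomogeneous.gradAt_dotProduct_self [Fintype σ] {f : MvPolynomial σ R} {n : ℕ}
    (hf : f.IsHomogeneous n) (x : σ → R) : gradAt f x ⬝ᵥ x = n * eval x f := by
  simpa [gradAt, dotProduct, mul_comm, nsmul_eq_mul] using congrArg (eval x) hf.sum_X_mul_pderiv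

theorem aeval_add_sub_mem_sq {S : Type*} [CommRing S] [Algebra R S] [Fintype σ]
    (f : MvPolynomial σ R) (x : σ → R) {I : Ideal S} {w : σ → S} (hw : ∀ i, w i ∈ I) :
    aeval (fun i => algebraMap R S (x i) + w i) f
      - (algebraMap R S (eval x f) + ∑ i, algebraMap R S (gradAt f x i) * w i) ∈ I ^ 2 := by
  classical
  induction f using MvPolynomial.induction_on with
  | C a => simp [gradAt]
  | add p q hp hq =>
    convert add_mem hp hq using 1
    simp only [gradAt, map_add, Finset.sum_add_distrib, add_mul]
    ring
  | mul_X p j hp =>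
    set L := ∑ i, algebraMap R S (gradAt p x i) * w i
    have hL : L ∈ I := Ideal.sum_mem _ fun i _ => I.mul_mem_left _ (hw i)
    have hderiv : ∑ i, algebraMap R S (gradAt (p * X j) x i) * w i
        = algebraMap R S (x j) * L + algebraMap R S (eval x p) * w j := by
      simp [L, gradAt, pderiv_X, Pi.single_apply, apply_ite, add_mul, Finset.sum_add_distrib,
        Finset.mul_sum, mul_assoc, add_comm]
    convert add_mem (Ideal.mul_mem_right (algebraMap R S (x j) + w j) _ hp)
      (by rw [pow_two]; exact Ideal.mul_mem_mul hL (hw j)) using 1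
    rw [hderiv]
    simp only [map_mul, aeval_X, eval_X]
    ring

theorem IsHomogeneous.mem_pow_idealOfVars {p : MvPolynomial σ R} {n : ℕ}
    (hp : p.IsHomogeneous n) : p ∈ idealOfVars σ R ^ n :=
  (mem_pow_idealOfVars_iff n p).2 fun d hd => by
    rw [Finsupp.degree_eq_weight_one]
    exact (hp (mem_support_iff.1 hd)).ge

theorem homogeneousComponent_eq_zero_of_mem_pow_idealOfVars {p : MvPolynomial σ R} {n k : ℕ}
    (hp : p ∈ idealOfVars σ R ^ n) (hk : k < n) : homogeneousComponent k p = 0 := by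
  ext d
  rw [coeff_homogeneousComponent, coeff_zero]
  split_ifs with hd
  · exact (mem_pow_idealOfVars_iff' n p).1 hp d (hd ▸ hk)
  · rfl

theorem exists_aeval_eq_sum_mul_pow {f : MvPolynomial σ R} {n : ℕ} (hf : f.IsHomogeneous n)
    (x u v : σ → R) :
    ∃ P : ℕ → MvPolynomial (Fin 2) R, (∀ j ≤ n, (P j).IsHomogeneous (n - j)) ∧
      ∀ y, aeval (fun i => C (x i) * y + C (u i) * X 0 + C (v i) * X 1) f
        = ∑ j ∈ Finset.range (n + 1), P j * y ^ j := by
  -- `K(r, s, t) = f(r x + s u + t v)` is homogeneous; expand it in powers of `r`.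
  set K := aeval (fun i => C (x i) * X 0 + C (u i) * X 1 + C (v i) * X 2 :
    σ → MvPolynomial (Fin 3) R) f
  have hK : K.IsHomogeneous n := by
    simpa using hf.aeval _ fun i =>
      ((isHomogeneous_C_mul_X _ _).add (isHomogeneous_C_mul_X _ _)).add
        (isHomogeneous_C_mul_X _ _)
  refine ⟨fun j => (finSuccEquiv R 2 K).coeff j,
    fun j hj => hK.finSuccEquiv_coeff_isHomogeneous j _ (by omega), fun y => ?_⟩
  have hdeg : (finSuccEquiv R 2 K).natDegree < n + 1 := by
    rw [natDegree_finSuccEquiv]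
    exact Nat.lt_succ_of_le ((degreeOf_le_totalDegree K 0).trans hK.totalDegree_le)
  rw [← Polynomial.eval_eq_sum_range' hdeg, ← aeval_cons_X_eq_eval_finSuccEquiv,
    comp_aeval_apply]
  congr 2
  funext i
  simp only [map_add, map_mul, aeval_C, aeval_X, algebraMap_eq]
  rfl

theorem exists_aeval_affine_eq_sum [Fintype σ] {f : MvPolynomial σ R} {m : ℕ}
    (hf : f.IsHomogeneous (m + 1)) (x u v : σ → R) :
    ∃ P : ℕ → MvPolynomial (Fin 2) R, (∀ j < m, (P j).IsHomogeneous (m + 1 - j)) ∧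
      ∀ y, aeval (fun i => C (x i) * y + C (u i) * X 0 + C (v i) * X 1) f
        = ∑ j ∈ Finset.range m, P j * y ^ j
          + (C (gradAt f x ⬝ᵥ u) * X 0 + C (gradAt f x ⬝ᵥ v) * X 1) * y ^ m
          + C (eval x f) * y ^ (m + 1) := by
  obtain ⟨P, hP, hexp⟩ := exists_aeval_eq_sum_mul_pow hf x u v
  set L : MvPolynomial (Fin 2) R := C (gradAt f x ⬝ᵥ u) * X 0 + C (gradAt f x ⬝ᵥ v) * X 1
  set D₀ := P (m + 1) - C (eval x f)
  set D₁ := P m - L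
  have hD₀ : D₀.IsHomogeneous 0 := by
    have h := hP (m + 1) le_rfl
    rw [Nat.sub_self] at h
    exact h.sub (isHomogeneous_C _ _)
  have hD₁ : D₁.IsHomogeneous 1 := by
    have h := hP m m.le_succ
    rw [Nat.add_sub_cancel_left] at h
    exact h.sub ((isHomogeneous_C_mul_X _ _).add (isHomogeneous_C_mul_X _ _))
  -- First-order Taylor expansion at `y = 1` pins down the parts of degree `0` and `1`.
  have hD : D₁ + D₀ ∈ idealOfVars (Fin 2) R ^ 2 := by
    have hw : ∀ i, (C (u i) * X 0 + C (v i) * X 1 : MvPolynomial (Fin 2) R)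
        ∈ idealOfVars (Fin 2) R := fun i => pow_one (idealOfVars (Fin 2) R) ▸
      ((isHomogeneous_C_mul_X _ _).add (isHomogeneous_C_mul_X _ _)).mem_pow_idealOfVars
    have hrest : ∑ j ∈ Finset.range m, P j ∈ idealOfVars (Fin 2) R ^ 2 :=
      Ideal.sum_mem _ fun j hj => Ideal.pow_le_pow_right (by simp at hj; omega)
        (hP j (by simp at hj; omega)).mem_pow_idealOfVars
    have hlin : ∑ i, algebraMap R _ (gradAt f x i) * (C (u i) * X 0 + C (v i) * X 1) = L := by
      simp [L, dotProduct, mul_add, Finset.sum_add_distrib, Finset.sum_mul, mul_assoc]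
    have hchart : aeval (fun i => algebraMap R _ (x i) + (C (u i) * X 0 + C (v i) * X 1)) f
        = ∑ j ∈ Finset.range (m + 2), P j := by
      simpa [add_assoc] using hexp 1
    convert sub_mem (aeval_add_sub_mem_sq f x hw) hrest using 1
    rw [hchart, hlin, Finset.sum_range_succ, Finset.sum_range_succ]
    simp only [D₀, D₁, algebraMap_eq]
    ring
  have h₀ := homogeneousComponent_eq_zero_of_mem_pow_idealOfVars (k := 0) hD two_pos
  have h₁ := homogeneousComponent_eq_zero_of_mem_pow_idealOfVars (k := 1) hD one_lt_two
  rw [map_add, homogeneousComponent_of_mem hD₀, homogeneousComponent_of_mem hD₁] at h₀ h₁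
  simp only [one_ne_zero, zero_ne_one, if_true, if_false, zero_add, add_zero] at h₀ h₁
  refine ⟨P, fun j hj => hP j (by omega), fun y => ?_⟩
  rw [hexp, Finset.sum_range_succ, Finset.sum_range_succ, ← sub_eq_zero.1 h₀,
    ← sub_eq_zero.1 h₁]

theorem exists_eq_of_isHomogeneous_two {p : MvPolynomial (Fin 2) R} (hp : p.IsHomogeneous 2) :
    ∃ a b c : R, p = C a * X 0 ^ 2 + C b * X 0 * X 1 + C c * X 1 ^ 2 := by
  refine ⟨coeff (Finsupp.single 0 2) p, coeff (Finsupp.single 0 1 + Finsupp.single 1 1) p,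
    coeff (Finsupp.single 1 2) p, ?_⟩
  rw [C_mul_X_pow_eq_monomial, C_mul_X_pow_eq_monomial, mul_assoc, X, X, monomial_mul,
    C_mul_monomial, one_mul, mul_one]
  ext d
  obtain ⟨a, b, rfl⟩ : ∃ a b, d = Finsupp.single 0 a + Finsupp.single 1 b :=
    ⟨d 0, d 1, by ext i; fin_cases i <;> simp⟩
  by_cases hab : a + b = 2
  · obtain ⟨rfl, rfl⟩ | ⟨rfl, rfl⟩ | ⟨rfl, rfl⟩ :
        (a = 2 ∧ b = 0) ∨ (a = 1 ∧ b = 1) ∨ (a = 0 ∧ b = 2) := by omega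
    all_goals simp [coeff_monomial, Finsupp.ext_iff, Fin.forall_fin_two]
  · rw [hp.coeff_eq_zero (by simpa [Finsupp.degree_eq_sum] using hab)]
    simp only [coeff_add, coeff_monomial, Finsupp.ext_iff, Finsupp.coe_add, Pi.add_apply,
      Fin.forall_fin_two, Finsupp.single_eq_same, Finsupp.single_eq_of_ne, zero_ne_one,
      one_ne_zero, ne_eq, not_false_eq_true, add_zero, zero_add]
    split_ifs <;> first | omega | simp

theorem exists_cube_completion {K : Type*} [Field K] [CharZero K] {P : MvPolynomial (Fin 2) K}
    (hP : P.IsHomogeneous 2) :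
    ∃ d ν μ : K, 2 * X 1 * (P + 2 * (C ν * X 0 + C μ * X 1) * X 1)
      = X 0 ^ 3 - (X 0 + C d * X 1) ^ 3 := by
  obtain ⟨a, b, c, rfl⟩ := exists_eq_of_isHomogeneous_two hP
  obtain ⟨d, hd⟩ : ∃ d : K, 2 * a + 3 * d = 0 := ⟨-2 * a / 3, by field_simp; ring⟩
  obtain ⟨ν, hν⟩ : ∃ ν : K, 2 * b + 4 * ν + 3 * d ^ 2 = 0 :=
    ⟨-(2 * b + 3 * d ^ 2) / 4, by field_simp; ring⟩
  obtain ⟨μ, hμ⟩ : ∃ μ : K, 2 * c + 4 * μ + d ^ 3 = 0 :=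
    ⟨-(2 * c + d ^ 3) / 4, by field_simp; ring⟩
  refine ⟨d, ν, μ, ?_⟩
  replace hd := congrArg (C (σ := Fin 2)) hd
  replace hν := congrArg (C (σ := Fin 2)) hν
  replace hμ := congrArg (C (σ := Fin 2)) hμ
  simp only [map_add, map_mul, map_pow, map_ofNat, map_zero] at hd hν hμ
  linear_combination (X 0 ^ 2 * X 1) * hd + (X 0 * X 1 ^ 2) * hν + X 1 ^ 3 * hμ

theorem linearIndependent_X_zero_add_C_mul_X_one {K : Type*} [Field K] (d : K) :
    LinearIndependent K ![(X 0 + C d * X 1 : MvPolynomial (Fin 2) K), X 1] := by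
  refine LinearIndependent.pair_iff.2 fun a b hab => ?_
  have ha : a = 0 := by simpa [smul_eq_C_mul] using congrArg (coeff (Finsupp.single 0 1)) hab
  have hb : a * d + b = 0 := by
    simpa [smul_eq_C_mul] using congrArg (coeff (Finsupp.single 1 1)) hab
  exact ⟨ha, by simpa [ha] using hb⟩

theorem exists_shift_sq_sub_cube_mem_pow_four {K : Type*} [Field K] [CharZero K] [Fintype σ]
    {f₂ f₃ : MvPolynomial σ K} (h₂ : f₂.IsHomogeneous 2) (h₃ : f₃.IsHomogeneous 3)
    {x u v : σ → K} (hx₂ : eval x f₂ = 0) (hx₃ : eval x f₃ = 0)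
    (hu₂ : gradAt f₂ x ⬝ᵥ u = 1) (hu₃ : gradAt f₃ x ⬝ᵥ u = 0)
    (hv₂ : gradAt f₂ x ⬝ᵥ v = 0) (hv₃ : gradAt f₃ x ⬝ᵥ v = 1) :
    ∃ d ν μ : K,
      aeval (fun i => C (x i) + C ((u + ν • x) i) * X 0 + C ((v + μ • x) i) * X 1)
          (f₃ ^ 2 - f₂ ^ 3) - (X 1 ^ 2 - (X 0 + C d * X 1) ^ 3)
        ∈ idealOfVars (Fin 2) K ^ 4 := by
  obtain ⟨P, hP, hF₃⟩ := exists_aeval_affine_eq_sum (m := 2) h₃ x u v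
  obtain ⟨B, hB, hF₂⟩ := exists_aeval_affine_eq_sum (m := 1) h₂ x u v
  obtain ⟨d, ν, μ, hcube⟩ := exists_cube_completion (hP 1 one_lt_two)
  set W : MvPolynomial (Fin 2) K := C ν * X 0 + C μ * X 1
  have hchart : (fun i => C (x i) + C ((u + ν • x) i) * X 0 + C ((v + μ • x) i) * X 1)
      = fun i => C (x i) * (1 + W) + C (u i) * X 0 + C (v i) * X 1 := by
    funext i
    simp only [Pi.add_apply, Pi.smul_apply, smul_eq_mul, C_add, C_mul, W]
    ring
  have hX : ∀ i, (X i : MvPolynomial (Fin 2) K) ∈ idealOfVars (Fin 2) K :=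
    fun i => Ideal.subset_span ⟨i, rfl⟩
  refine ⟨d, ν, μ, ?_⟩
  simp only [hchart, map_sub, map_pow, hF₃, hF₂, hu₂, hu₃, hv₂, hv₃, hx₂, hx₃,
    Finset.sum_range_succ, Finset.range_one, Finset.sum_singleton, Nat.reduceAdd, pow_zero,
    pow_one, mul_one, one_mul, zero_mul, zero_add, add_zero, C_0, C_1]
  exact shifted_sq_sub_cube_sub_mem_pow_four (hX 0) (hX 1)
    (add_mem (Ideal.mul_mem_left _ _ (hX 0)) (Ideal.mul_mem_left _ _ (hX 1)))
    (hP 0 two_pos).mem_pow_idealOfVars (hP 1 one_lt_two).mem_pow_idealOfVars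
    (hB 0 one_pos).mem_pow_idealOfVars hcube

end MvPolynomial

theorem sextic_has_ordinary_cusps_general
    (f2 f3 : MvPolynomial (Fin 3) ℂ)
    (h2 : f2.IsHomogeneous 2) (h3 : f3.IsHomogeneous 3)
    (htrans : ∀ x : Fin 3 → ℂ, x ≠ 0 → eval x f2 = 0 → eval x f3 = 0 →
      ∀ a b : ℂ, (∀ i : Fin 3,
          a * eval x (pderiv i f2) + b * eval x (pderiv i f3) = 0) →
        a = 0 ∧ b = 0)
    (x : Fin 3 → ℂ) (hx : x ≠ 0) (hx2 : eval x f2 = 0) (hx3 : eval x f3 = 0) :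
    ∃ e e' : Fin 3 → ℂ, LinearIndependent ℂ ![x, e, e'] ∧
      ∃ p1 q1 h : MvPolynomial (Fin 2) ℂ,
        p1.IsHomogeneous 1 ∧ q1.IsHomogeneous 1 ∧
        (∀ a b : ℂ, a • p1 + b • q1 = 0 → a = 0 ∧ b = 0) ∧
        (∀ d ∈ h.support, 4 ≤ d 0 + d 1) ∧
        (aeval (fun i : Fin 3 => C (x i) + C (e i) * X 0 + C (e' i) * X 1)
            (f3 ^ 2 - f2 ^ 3) : MvPolynomial (Fin 2) ℂ)
          = q1 ^ 2 - p1 ^ 3 + h := by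
  have hgrad : LinearIndependent ℂ ![gradAt f2 x, gradAt f3 x] :=
    LinearIndependent.pair_iff.2 fun a b hab => htrans x hx hx2 hx3 a b fun i => by
      simpa [gradAt] using congrFun hab i
  obtain ⟨u, hu⟩ := mulVec_surjective_of_linearIndependent_row hgrad ![1, 0]
  obtain ⟨v, hv⟩ := mulVec_surjective_of_linearIndependent_row hgrad ![0, 1]
  obtain ⟨d, ν, μ, hF⟩ := exists_shift_sq_sub_cube_mem_pow_four h2 h3 hx2 hx3
    (congrFun hu 0) (congrFun hu 1) (congrFun hv 0) (congrFun hv 1)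
  refine ⟨u + ν • x, v + μ • x, ?_, X 0 + C d * X 1, X 1, _,
    (isHomogeneous_X _ _).add (isHomogeneous_C_mul_X _ _), isHomogeneous_X _ _,
    LinearIndependent.pair_iff.1 (linearIndependent_X_zero_add_C_mul_X_one d), fun m hm => ?_,
    (add_sub_cancel _ _).symm⟩
  · refine linearIndependent_add_smul_of_dotProduct_eq hx ?_ ?_ (congrFun hu 0) (congrFun hu 1)
      (congrFun hv 0) (congrFun hv 1) ν μ
    · simp [h2.gradAt_dotProduct_self, hx2]
    · simp [h3.gradAt_dotProduct_self, hx3]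
  · simpa [Finsupp.degree_eq_sum] using (mem_pow_idealOfVars_iff 4 _).1 hF m hm

/-- If `f2`, `f3` are homogeneous of degrees 2 and 3 defining a smooth conic and a
smooth cubic intersecting transversally, then at each common zero the sextic
`f3^2 - f2^3 = 0` has an ordinary cusp: in suitable local affine coordinates its
equation has the form `q1^2 - p1^3 + (terms of degree ≥ 4)`, where `p1` and `q1`
are linearly independent linear forms. -/
theorem sextic_has_ordinary_cusps
    (f2 f3 : MvPolynomial (Fin 3) ℂ)
    (h2 : f2.IsHomogeneous 2) (h3 : f3.IsHomogeneous 3)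
    (hsm2 : ∀ x : Fin 3 → ℂ, x ≠ 0 → eval x f2 = 0 →
      ∃ i : Fin 3, eval x (pderiv i f2) ≠ 0)
    (hsm3 : ∀ x : Fin 3 → ℂ, x ≠ 0 → eval x f3 = 0 →
      ∃ i : Fin 3, eval x (pderiv i f3) ≠ 0)
    (htrans : ∀ x : Fin 3 → ℂ, x ≠ 0 → eval x f2 = 0 → eval x f3 = 0 →
      ∀ a b : ℂ, (∀ i : Fin 3,
          a * eval x (pderiv i f2) + b * eval x (pderiv i f3) = 0) →
        a = 0 ∧ b = 0)
    (x : Fin 3 → ℂ) (hx : x ≠ 0) (hx2 : eval x f2 = 0) (hx3 : eval x f3 = 0) :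
    ∃ e e' : Fin 3 → ℂ, LinearIndependent ℂ ![x, e, e'] ∧
      ∃ p1 q1 h : MvPolynomial (Fin 2) ℂ,
        p1.IsHomogeneous 1 ∧ q1.IsHomogeneous 1 ∧
        (∀ a b : ℂ, a • p1 + b • q1 = 0 → a = 0 ∧ b = 0) ∧
        (∀ d ∈ h.support, 4 ≤ d 0 + d 1) ∧
        (aeval (fun i : Fin 3 => C (x i) + C (e i) * X 0 + C (e' i) * X 1)
            (f3 ^ 2 - f2 ^ 3) : MvPolynomial (Fin 2) ℂ)
          = q1 ^ 2 - p1 ^ 3 + h :=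
  sextic_has_ordinary_cusps_general f2 f3 h2 h3 htrans x hx hx2 hx3
end

section
/- The bilinear system of ten equations (1+β3)v0 + 3β0·v3 = 0, (1+β3)v1 + 3β1·v3 = 0, (1+β3)v2 - 3β2·v3 = 0, β1·v0 + β0·v1 = 0, β2·v0 + (1-β0)·v2 = 0, (1-β2)·v1 + β1·v2 = 0, 2β1·v1 - v2 = L, -v0 + 2β2·v2 = L, (3+2β0)·v0 = L, 2β3·v3 = L, where L = λ - Σ_j β_j·v_j - v3 and λ ∈ ℂ \ {0}, has a solution (v0,v1,v2,v3) ≠ 0 only when β0 = β1 = β2 = β3 = 0, in which case the unique solution is (v0,v1,v2,v3) = (0,0,0,λ). -/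
/-!
If `v3 = 0` then `L = 0`, and `e4`–`e9` become a homogeneous linear system in `v0, v1, v2`.
By `e7`, `e8` its solutions are multiples of `(4 β1 β2, 1, 2 β1)`, and one with `β1 v1 ≠ 0`
would make the `β`'s a common root of an inconsistent polynomial system; hence
`β0 v0 + β1 v1 + β2 v2 = 0`, which forces `λ = 0`. So `v3 ≠ 0`. Multiplying `e4`–`e9` by
`1 + β3` and substituting `e1`–`e3` eliminates `v0, v1, v2` and, after cancelling `v3`, leaves
polynomial relations in `β0, β1, β2` alone whose only common root is `0`. The remaining
equations are then linear and give `β3 = 0` and `v = (0, 0, 0, λ)`.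
-/

namespace BilinearSystem

variable {K : Type*} [Field K] [CharZero K] {β0 β1 β2 β3 v0 v1 v2 v3 lam L : K}

theorem homogeneous_relations_inconsistent (h4 : 4 * β1 ^ 2 * β2 + β0 = 0)
    (h5 : 2 * β2 ^ 2 + 1 - β0 = 0) (h6 : 1 - β2 + 2 * β1 ^ 2 = 0)
    (h9 : β2 * (3 + 2 * β0) = 0) : False := by
  have quad : 4 * β2 ^ 2 - 2 * β2 + 1 = 0 := by linear_combination h4 + h5 - 2 * β2 * h6
  rcases mul_eq_zero.mp h9 with hβ2 | hβ0
  · exact one_ne_zero (show (1 : K) = 0 by linear_combination quad - (4 * β2 - 2) * hβ2)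
  · have hβ2 : β2 = -2 := by linear_combination (quad - 2 * h5 - hβ0) / (-2)
    have : (21 : K) = 0 := by linear_combination 2 * h5 + hβ0 - 4 * (β2 - 2) * hβ2
    norm_num at this

theorem weighted_sum_eq_zero_of_homogeneous (e4 : β1 * v0 + β0 * v1 = 0)
    (e5 : β2 * v0 + (1 - β0) * v2 = 0) (e6 : (1 - β2) * v1 + β1 * v2 = 0)
    (e7 : 2 * β1 * v1 - v2 = 0) (e8 : -v0 + 2 * β2 * v2 = 0) (e9 : (3 + 2 * β0) * v0 = 0) :
    β0 * v0 + β1 * v1 + β2 * v2 = 0 := by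
  have hv2 : v2 = 2 * β1 * v1 := by linear_combination -e7
  have hv0 : v0 = 4 * β1 * β2 * v1 := by linear_combination -e8 + 2 * β2 * hv2
  suffices hβ1v1 : β1 * v1 = 0 by
    linear_combination β0 * hv0 + β2 * hv2 + (4 * β0 * β2 + 1 + 2 * β2) * hβ1v1
  by_contra h
  obtain ⟨hβ1, hv1⟩ := mul_ne_zero_iff.mp h
  have h4 : 4 * β1 ^ 2 * β2 + β0 = 0 :=
    eq_zero_of_ne_zero_of_mul_left_eq_zero hv1 (by linear_combination e4 - β1 * hv0)
  have h5 : 2 * β2 ^ 2 + 1 - β0 = 0 := eq_zero_of_ne_zero_of_mul_left_eq_zero hβ1 <|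
    eq_zero_of_ne_zero_of_mul_left_eq_zero hv1 <| by
      linear_combination (e5 - β2 * hv0 - (1 - β0) * hv2) / 2
  have h6 : 1 - β2 + 2 * β1 ^ 2 = 0 :=
    eq_zero_of_ne_zero_of_mul_left_eq_zero hv1 (by linear_combination e6 - β1 * hv2)
  have h9 : β2 * (3 + 2 * β0) = 0 := eq_zero_of_ne_zero_of_mul_left_eq_zero hβ1 <|
    eq_zero_of_ne_zero_of_mul_left_eq_zero hv1 <| by
      linear_combination (e9 - (3 + 2 * β0) * hv0) / 4
  exact homogeneous_relations_inconsistent h4 h5 h6 h9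

theorem v3_ne_zero (hlam : lam ≠ 0)
    (hL : L = lam - (β0 * v0 + β1 * v1 + β2 * v2 + β3 * v3) - v3)
    (e4 : β1 * v0 + β0 * v1 = 0) (e5 : β2 * v0 + (1 - β0) * v2 = 0)
    (e6 : (1 - β2) * v1 + β1 * v2 = 0) (e7 : 2 * β1 * v1 - v2 = L) (e8 : -v0 + 2 * β2 * v2 = L)
    (e9 : (3 + 2 * β0) * v0 = L) (e10 : 2 * β3 * v3 = L) : v3 ≠ 0 := by
  rintro rfl
  have hL0 : L = 0 := by linear_combination -e10
  rw [hL0] at e7 e8 e9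
  exact hlam (by
    linear_combination -hL + hL0 + weighted_sum_eq_zero_of_homogeneous e4 e5 e6 e7 e8 e9)

theorem beta_eq_zero_of_relations (g1 : β0 * β1 = 0) (g2 : β2 * (1 - 2 * β0) = 0)
    (g3 : β1 * (2 * β2 - 1) = 0) (g4 : β2 ^ 2 + β0 * (2 + β0) = 0)
    (g5 : β0 * (3 + 2 * β0) - 2 * β1 ^ 2 - β2 = 0) : β0 = 0 ∧ β1 = 0 ∧ β2 = 0 := by
  rcases mul_eq_zero.mp g2 with hβ2 | hβ0
  · have hβ1 : β1 = 0 := by linear_combination 2 * β1 * hβ2 - g3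
    refine ⟨?_, hβ1, hβ2⟩
    linear_combination 2 * g4 - g5 - 2 * β2 * hβ2 - 2 * β1 * hβ1 - hβ2
  · have hβ1 : β1 = 0 := by linear_combination 2 * g1 + β1 * hβ0
    have hβ2 : β2 = 2 := by linear_combination -g5 - 2 * β1 * hβ1 - (β0 + 2) * hβ0
    have : (21 : K) / 4 = 0 := by
      linear_combination g4 + ((2 * β0 + 5) / 4) * hβ0 - (β2 + 2) * hβ2
    norm_num at this

theorem beta_eq_zero_of_v3_ne_zero (hv3 : v3 ≠ 0)
    (e1 : (1 + β3) * v0 + 3 * β0 * v3 = 0) (e2 : (1 + β3) * v1 + 3 * β1 * v3 = 0)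
    (e3 : (1 + β3) * v2 - 3 * β2 * v3 = 0) (e4 : β1 * v0 + β0 * v1 = 0)
    (e5 : β2 * v0 + (1 - β0) * v2 = 0) (e6 : (1 - β2) * v1 + β1 * v2 = 0)
    (e7 : 2 * β1 * v1 - v2 = L) (e8 : -v0 + 2 * β2 * v2 = L) (e9 : (3 + 2 * β0) * v0 = L) :
    β0 = 0 ∧ β1 = 0 ∧ β2 = 0 := by
  refine beta_eq_zero_of_relations (eq_zero_of_ne_zero_of_mul_left_eq_zero hv3 ?_)
    (eq_zero_of_ne_zero_of_mul_left_eq_zero hv3 ?_) (eq_zero_of_ne_zero_of_mul_left_eq_zero hv3 ?_)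
    (eq_zero_of_ne_zero_of_mul_left_eq_zero hv3 ?_) (eq_zero_of_ne_zero_of_mul_left_eq_zero hv3 ?_)
  · linear_combination (β1 * e1 + β0 * e2 - (1 + β3) * e4) / 6
  · linear_combination ((1 + β3) * e5 - β2 * e1 - (1 - β0) * e3) / 3
  · linear_combination ((1 + β3) * e6 - (1 - β2) * e2 - β1 * e3) / 3
  · linear_combination ((2 + β0) * e1 - β2 * e3 - (1 + β3) * (e9 - e8) / 2) / 3
  · linear_combination ((1 + β3) * (e7 - e9) - 2 * β1 * e2 + e3 + (3 + 2 * β0) * e1) / 3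

end BilinearSystem

open BilinearSystem in
/-- The bilinear system of ten equations in `v0,…,v3`, `β0,…,β3`
(with `L = λ - Σ β_j v_j - v3` and `λ ≠ 0`) has a solution only when
`β0 = β1 = β2 = β3 = 0`, in which case the unique solution is
`(v0, v1, v2, v3) = (0, 0, 0, λ)`. -/
theorem bilinear_system_solution
    (β0 β1 β2 β3 v0 v1 v2 v3 lam : ℂ) (hlam : lam ≠ 0)
    (L : ℂ) (hL : L = lam - (β0 * v0 + β1 * v1 + β2 * v2 + β3 * v3) - v3)
    (e1 : (1 + β3) * v0 + 3 * β0 * v3 = 0)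
    (e2 : (1 + β3) * v1 + 3 * β1 * v3 = 0)
    (e3 : (1 + β3) * v2 - 3 * β2 * v3 = 0)
    (e4 : β1 * v0 + β0 * v1 = 0)
    (e5 : β2 * v0 + (1 - β0) * v2 = 0)
    (e6 : (1 - β2) * v1 + β1 * v2 = 0)
    (e7 : 2 * β1 * v1 - v2 = L)
    (e8 : -v0 + 2 * β2 * v2 = L)
    (e9 : (3 + 2 * β0) * v0 = L)
    (e10 : 2 * β3 * v3 = L) :
    β0 = 0 ∧ β1 = 0 ∧ β2 = 0 ∧ β3 = 0 ∧
      v0 = 0 ∧ v1 = 0 ∧ v2 = 0 ∧ v3 = lam := by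
  have hv3 := v3_ne_zero hlam hL e4 e5 e6 e7 e8 e9 e10
  obtain ⟨rfl, rfl, rfl⟩ := beta_eq_zero_of_v3_ne_zero hv3 e1 e2 e3 e4 e5 e6 e7 e8 e9
  have hv0 : v0 = 0 := by linear_combination (e9 - e8) / 4
  have hL0 : L = 0 := by linear_combination -e9 + 3 * hv0
  have hv2 : v2 = 0 := by linear_combination -e7 - hL0
  have hv1 : v1 = 0 := by linear_combination e6
  have hβ3 : β3 = 0 := eq_zero_of_ne_zero_of_mul_left_eq_zero hv3 (by
    linear_combination (e10 + hL0) / 2)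
  subst hv0 hv1 hv2 hβ3
  exact ⟨rfl, rfl, rfl, rfl, rfl, rfl, rfl, by linear_combination hL - hL0⟩
end

section
/- Let C ⊂ ℙ^3 be the complete intersection of the cubic F3 = x3^3 + (x0^2+x1^2-x2^2)x3 + x0^3 + x0·x2^2 - x1^2·x2 = 0 and the quadric ∂F3/∂x3 = 3x3^2 + x0^2 + x1^2 - x2^2 = 0. Then C is a smooth curve. -/
/-!
Write `Q = ∂F3/∂x3`. If `a ∇F3 + b ∇Q = 0` at a point of `C`, the `x3`-component reads
`a Q + 6 b x3 = 0`, so `b x3 = 0` because `Q` vanishes on `C`. If `a = 0`, then `b ∇Q = 0`, but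
`∇Q = 2 (x0, x1, -x2, 3 x3)` vanishes only at the origin. Otherwise either `b = 0` and the point
is singular on the cubic surface `F3 = 0`, which is smooth, or `x3 = 0`, where the
`x1`-component forces `x1 = 0` or `b = a x2`; in both cases elimination leaves only the origin.
-/

open MvPolynomial

/-- The cubic form `F3 = x3^3 + (x0^2+x1^2-x2^2) x3 + x0^3 + x0 x2^2 - x1^2 x2`. -/
noncomputable def F3 : MvPolynomial (Fin 4) ℂ :=
  X 3 ^ 3 + (X 0 ^ 2 + X 1 ^ 2 - X 2 ^ 2) * X 3
    + X 0 ^ 3 + X 0 * X 2 ^ 2 - X 1 ^ 2 * X 2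

@[simp]
theorem MvPolynomial.pderiv_ofNat {σ R : Type*} [CommSemiring R] (i : σ) (n : ℕ) [n.AtLeastTwo] :
    pderiv i (no_index (OfNat.ofNat n) : MvPolynomial σ R) = 0 :=
  (pderiv i).map_natCast n

@[simp]
theorem pderiv_zero_F3 : pderiv 0 F3 = 3 * X 0 ^ 2 + 2 * X 0 * X 3 + X 2 ^ 2 := by
  simp [F3, pderiv_X]
  ring

@[simp]
theorem pderiv_one_F3 : pderiv 1 F3 = 2 * X 1 * (X 3 - X 2) := by
  simp [F3, pderiv_X]
  ring

@[simp]
theorem pderiv_two_F3 : pderiv 2 F3 = 2 * X 0 * X 2 - 2 * X 2 * X 3 - X 1 ^ 2 := by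
  simp [F3, pderiv_X]
  ring

@[simp]
theorem pderiv_three_F3 : pderiv 3 F3 = 3 * X 3 ^ 2 + X 0 ^ 2 + X 1 ^ 2 - X 2 ^ 2 := by
  simp [F3, pderiv_X]
  ring

theorem fin_four_eq_zero_iff {M : Type*} [Zero M] {x : Fin 4 → M} :
    x = 0 ↔ x 0 = 0 ∧ x 1 = 0 ∧ x 2 = 0 ∧ x 3 = 0 := by
  simp [funext_iff, Fin.forall_fin_succ]

section

variable {x : Fin 4 → ℂ}

theorem eq_zero_of_eval_pderiv_F3_eq_zero (h : ∀ i, eval x (pderiv i F3) = 0) : x = 0 := by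
  have h0 : 3 * x 0 ^ 2 + 2 * x 0 * x 3 + x 2 ^ 2 = 0 := by simpa using h 0
  have h1 : x 1 = 0 ∨ x 3 = x 2 := by simpa [sub_eq_zero] using h 1
  have h2 : 2 * x 0 * x 2 - 2 * x 2 * x 3 - x 1 ^ 2 = 0 := by simpa using h 2
  have h3 : 3 * x 3 ^ 2 + x 0 ^ 2 + x 1 ^ 2 - x 2 ^ 2 = 0 := by simpa using h 3
  rw [fin_four_eq_zero_iff]
  rcases h1 with h1 | h1 <;> grind

theorem eq_zero_of_eval_pderiv_pderiv_three_F3_eq_zero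
    (h : ∀ i, eval x (pderiv i (pderiv 3 F3)) = 0) : x = 0 :=
  fin_four_eq_zero_iff.mpr ⟨by simpa [pderiv_X] using h 0, by simpa [pderiv_X] using h 1,
    by simpa [pderiv_X] using h 2, by simpa [pderiv_X] using h 3⟩

theorem eq_zero_of_gradient_combination_of_apply_three_eq_zero (hx3 : x 3 = 0)
    (hF : eval x F3 = 0) (hQ : eval x (pderiv 3 F3) = 0) {a b : ℂ} (ha : a ≠ 0)
    (h : ∀ i, a * eval x (pderiv i F3) + b * eval x (pderiv i (pderiv 3 F3)) = 0) : x = 0 := by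
  have hF : x 0 ^ 3 + x 0 * x 2 ^ 2 - x 1 ^ 2 * x 2 = 0 := by simpa [F3, hx3] using hF
  have hQ : x 0 ^ 2 + x 1 ^ 2 - x 2 ^ 2 = 0 := by simpa [hx3] using hQ
  have h0 : a * (3 * x 0 ^ 2 + x 2 ^ 2) + b * (2 * x 0) = 0 := by simpa [pderiv_X, hx3] using h 0
  have h1 : b * (2 * x 1) - a * (2 * x 1 * x 2) = 0 := by
    simpa [pderiv_X, hx3, neg_add_eq_sub] using h 1
  have h2 : a * (2 * x 0 * x 2 - x 1 ^ 2) - b * (2 * x 2) = 0 := by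
    simpa [pderiv_X, hx3, ← sub_eq_add_neg] using h 2
  have hb : x 1 = 0 ∨ b = a * x 2 := by
    simpa [sub_eq_zero] using (show x 1 * (b - a * x 2) = 0 by linear_combination h1 / 2)
  rw [fin_four_eq_zero_iff]
  rcases hb with hb | hb <;> grind

end

/-- The curve `C ⊂ ℙ^3` cut out by `F3 = 0` and `∂F3/∂x3 = 0` is smooth: at every
nonzero point of `C` the two gradients are linearly independent, i.e. the 2×4
Jacobian matrix of `(F3, ∂F3/∂x3)` has rank 2 there. -/
theorem canonical_curve_smooth :
    ∀ x : Fin 4 → ℂ, x ≠ 0 →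
      eval x F3 = 0 → eval x (pderiv 3 F3) = 0 →
      ∀ a b : ℂ,
        (∀ i : Fin 4,
          a * eval x (pderiv i F3) + b * eval x (pderiv i (pderiv 3 F3)) = 0) →
        a = 0 ∧ b = 0 := by
  intro x hx hF hQ a b h
  have h3 := h 3
  rw [hQ, mul_zero, zero_add] at h3
  have hbx3 : b = 0 ∨ x 3 = 0 := by simpa [pderiv_X] using h3
  by_cases ha : a = 0
  · subst ha
    refine ⟨rfl, by_contra fun hb => hx ?_⟩
    exact eq_zero_of_eval_pderiv_pderiv_three_F3_eq_zero fun i => by simpa [hb] using h i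
  · refine (hx ?_).elim
    rcases hbx3 with rfl | hx3
    · exact eq_zero_of_eval_pderiv_F3_eq_zero fun i => by simpa [ha] using h i
    · exact eq_zero_of_gradient_combination_of_apply_three_eq_zero hx3 hF hQ ha h
end
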